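/- arXiv:2506.19244 — 4 statements merged into one kernel-verified Lean document; each statement's English description precedes it below -/
import Mathlib

section
/- There exist four affinely independent points A, B, C, D in ℝ³ and a point p in the interior of their convex hull such that the tetrahedron is stable on exactly one of its four faces with load point p; that is, monostable tetrahedra exist. -/
/-! An explicit tetrahedron works. The load sits just above the base `ABC`, so its foot on the
base plane lies inside `ABC`; on each other face the foot of the perpendicular from the load falls
outside the face, beyond one of its edges (`BCD` beyond `BC`, `ACD` beyond `AD`, `ABD` beyond
`AB`). Since the foot is unique, exhibiting it together with a line separating it from the face
rules out stability there. On the base, positive barycentric coordinates in the planar triangle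
give an interior point, and the isometric embedding of the plane `z = 0` carries interiors to
intrinsic interiors.
-/

open RealInnerProductSpace

noncomputable section

abbrev E3 : Type := EuclideanSpace ℝ (Fin 3)

/-- The tetrahedron with load point `p` is *stable* on the face with vertices
`v₁, v₂, v₃`: the orthogonal projection of `p` onto the affine span of the face
lies in the relative (intrinsic) interior of the face. -/
def StableOn (p v₁ v₂ v₃ : E3) : Prop :=
  ∃ q ∈ intrinsicInterior ℝ (convexHull ℝ ({v₁, v₂, v₃} : Set E3)),
    ∀ w ∈ (affineSpan ℝ ({v₁, v₂, v₃} : Set E3)).direction, ⟪p - q, w⟫ = 0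

/-- Placed on the face with vertices `apex, e₁, e₂` and load point `p`, the
tetrahedron *tips over* the edge `e₁e₂` onto the adjacent face: the orthogonal
projection `q` of `p` onto the plane of the face lies strictly on the opposite
side of the line through `e₁, e₂` from the remaining vertex `apex`. -/
def TipsOver (p apex e₁ e₂ : E3) : Prop :=
  ∃ q ∈ affineSpan ℝ ({apex, e₁, e₂} : Set E3),
    (∀ w ∈ (affineSpan ℝ ({apex, e₁, e₂} : Set E3)).direction, ⟪p - q, w⟫ = 0) ∧
    (affineSpan ℝ ({e₁, e₂} : Set E3)).SOppSide q apex

/-- The edge `PQ` of the tetrahedron `PQRS` is *obtuse*: writing `R'`, `S'` for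
the components of `R - P`, `S - P` orthogonal to `Q - P`, we have `⟪R', S'⟫ < 0`. -/
def ObtuseEdge (P Q R S : E3) : Prop :=
  ⟪(R - P) - (⟪R - P, Q - P⟫ / ⟪Q - P, Q - P⟫) • (Q - P),
   (S - P) - (⟪S - P, Q - P⟫ / ⟪Q - P, Q - P⟫) • (Q - P)⟫ < 0

/-- Stability on the `i`-th face of tetrahedron `ABCD` (the face opposite the
`i`-th vertex). -/
def FaceStable (A B C D p : E3) : Fin 4 → Prop
  | 0 => StableOn p B C D
  | 1 => StableOn p A C D
  | 2 => StableOn p A B D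
  | 3 => StableOn p A B C

section Affine

variable {k M : Type*} [Ring k] [AddCommGroup M] [Module k M]

theorem smul_sub_add_smul_sub_add_mem_affineSpan (v₁ v₂ v₃ : M) (s t : k) :
    s • (v₂ - v₁) + t • (v₃ - v₁) + v₁ ∈ affineSpan k ({v₁, v₂, v₃} : Set M) := by
  have hmem : ∀ v ∈ ({v₁, v₂, v₃} : Set M), v - v₁ ∈ vectorSpan k ({v₁, v₂, v₃} : Set M) :=
    fun v hv => vsub_mem_vectorSpan k hv (by simp)
  refine AffineSubspace.vadd_mem_of_mem_direction ?_ (subset_affineSpan k _ (by simp))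
  rw [direction_affineSpan]
  exact add_mem (Submodule.smul_mem _ s (hmem v₂ (by simp)))
    (Submodule.smul_mem _ t (hmem v₃ (by simp)))

end Affine

section InnerProduct

variable {V : Type*} [NormedAddCommGroup V] [InnerProductSpace ℝ V]

theorem AffineSubspace.eq_of_forall_inner_sub_eq_zero {s : AffineSubspace ℝ V} {p q q' : V}
    (hq : q ∈ s) (hq' : q' ∈ s) (h : ∀ w ∈ s.direction, ⟪p - q, w⟫ = 0)
    (h' : ∀ w ∈ s.direction, ⟪p - q', w⟫ = 0) : q = q' := by
  have hdir : q - q' ∈ s.direction := s.vsub_mem_direction hq hq'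
  have hself : ⟪q - q', q - q'⟫ = 0 := by
    rw [show ⟪q - q', q - q'⟫ = ⟪p - q', q - q'⟫ - ⟪p - q, q - q'⟫ by
      rw [← inner_sub_left, sub_sub_sub_cancel_left], h' _ hdir, h _ hdir, sub_zero]
  exact sub_eq_zero.mp (inner_self_eq_zero.mp hself)

theorem inner_eq_zero_of_mem_direction_affineSpan {S : Set V} {v₀ n : V} (h₀ : v₀ ∈ S)
    (hn : ∀ x ∈ S, ⟪n, x - v₀⟫ = 0) : ∀ w ∈ (affineSpan ℝ S).direction, ⟪n, w⟫ = 0 := by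
  intro w hw
  rw [direction_affineSpan, vectorSpan_eq_span_vsub_set_right ℝ h₀] at hw
  suffices h : Submodule.span ℝ ((· -ᵥ v₀) '' S) ≤ LinearMap.ker (innerₛₗ ℝ n) from h hw
  rw [Submodule.span_le]
  rintro _ ⟨x, hx, rfl⟩
  exact hn x hx

theorem inner_eq_zero_of_mem_direction_affineSpan_triple {n v₁ v₂ v₃ : V}
    (h₂ : ⟪n, v₂ - v₁⟫ = 0) (h₃ : ⟪n, v₃ - v₁⟫ = 0) :
    ∀ w ∈ (affineSpan ℝ ({v₁, v₂, v₃} : Set V)).direction, ⟪n, w⟫ = 0 :=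
  inner_eq_zero_of_mem_direction_affineSpan (Set.mem_insert _ _) <| by
    rintro x (rfl | rfl | rfl)
    exacts [by simp, h₂, h₃]

theorem notMem_convexHull_of_inner_lt {S : Set V} {n q : V} {c : ℝ}
    (hS : ∀ x ∈ S, ⟪n, x⟫ ≤ c) (hq : c < ⟪n, q⟫) : q ∉ convexHull ℝ S := fun hmem =>
  hq.not_ge <| convexHull_min hS (convex_halfSpace_le (innerₛₗ ℝ n).isLinear c) hmem

end InnerProduct

section Normed

variable {W : Type*} [NormedAddCommGroup W] [NormedSpace ℝ W]

theorem AffineIndependent.mem_interior_convexHull {ι : Type*} [Fintype ι]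
    [FiniteDimensional ℝ W] {v : ι → W} (hv : AffineIndependent ℝ v)
    (hcard : Fintype.card ι = Module.finrank ℝ W + 1) {w : ι → ℝ} {x : W}
    (hw : ∑ i, w i = 1) (hpos : ∀ i, 0 < w i) (hx : ∑ i, w i • v i = x) :
    x ∈ interior (convexHull ℝ (Set.range v)) := by
  let b : AffineBasis ι ℝ W :=
    ⟨v, hv, hv.affineSpan_eq_top_iff_card_eq_finrank_add_one.mpr hcard⟩
  rw [← hx, ← Finset.univ.affineCombination_eq_linear_combination _ _ hw]
  change Finset.univ.affineCombination ℝ b w ∈ interior (convexHull ℝ (Set.range b))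
  rw [b.interior_convexHull]
  intro i
  rw [b.coord_apply_combination_of_mem (Finset.mem_univ i) hw]
  exact hpos i

theorem AffineIsometry.map_mem_intrinsicInterior_convexHull {W' : Type*} [NormedAddCommGroup W']
    [NormedSpace ℝ W'] (φ : W →ᵃⁱ[ℝ] W') {S : Set W} {x : W}
    (hx : x ∈ interior (convexHull ℝ S)) :
    φ x ∈ intrinsicInterior ℝ (convexHull ℝ (φ '' S)) := by
  rw [← φ.coe_toAffineMap, ← φ.toAffineMap.image_convexHull, φ.coe_toAffineMap,
    φ.intrinsicInterior_image]
  exact Set.mem_image_of_mem φ (interior_subset_intrinsicInterior hx)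

end Normed

theorem not_stableOn_of_notMem_convexHull {p v₁ v₂ v₃ q : E3}
    (hq : q ∈ affineSpan ℝ ({v₁, v₂, v₃} : Set E3))
    (horth : ∀ w ∈ (affineSpan ℝ ({v₁, v₂, v₃} : Set E3)).direction, ⟪p - q, w⟫ = 0)
    (hout : q ∉ convexHull ℝ ({v₁, v₂, v₃} : Set E3)) : ¬ StableOn p v₁ v₂ v₃ := by
  rintro ⟨q', hq'I, hq'orth⟩
  have hq'c := intrinsicInterior_subset hq'I
  obtain rfl := AffineSubspace.eq_of_forall_inner_sub_eq_zero hq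
    (convexHull_subset_affineSpan _ hq'c) horth hq'orth
  exact hout hq'c

theorem not_stableOn_of_separated {p v₁ v₂ v₃ n : E3} (s t c : ℝ)
    (h₂ : ⟪p - (s • (v₂ - v₁) + t • (v₃ - v₁) + v₁), v₂ - v₁⟫ = 0)
    (h₃ : ⟪p - (s • (v₂ - v₁) + t • (v₃ - v₁) + v₁), v₃ - v₁⟫ = 0)
    (hv₁ : ⟪n, v₁⟫ ≤ c) (hv₂ : ⟪n, v₂⟫ ≤ c) (hv₃ : ⟪n, v₃⟫ ≤ c)
    (hq : c < ⟪n, s • (v₂ - v₁) + t • (v₃ - v₁) + v₁⟫) : ¬ StableOn p v₁ v₂ v₃ :=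
  not_stableOn_of_notMem_convexHull (smul_sub_add_smul_sub_add_mem_affineSpan v₁ v₂ v₃ s t)
    (inner_eq_zero_of_mem_direction_affineSpan_triple h₂ h₃)
    (notMem_convexHull_of_inner_lt (by rintro x (rfl | rfl | rfl) <;> assumption) hq)

namespace MonostableTetrahedron

def A : E3 := !₂[0, 0, 0]
def B : E3 := !₂[9, 0, 0]
def C : E3 := !₂[-26, 8, 0]
def D : E3 := !₂[16, -1, 3]
def load : E3 := !₂[11/2, 1/4, 1/100]

theorem affineIndependent_ABCD : AffineIndependent ℝ ![A, B, C, D] := by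
  rw [affineIndependent_iff_of_fintype]
  intro w hsum hcomb i
  rw [Finset.univ.weightedVSub_eq_linear_combination hsum] at hcomb
  have h₀ := congrArg (· 0) hcomb
  have h₁ := congrArg (· 1) hcomb
  have h₂ := congrArg (· 2) hcomb
  simp [Fin.sum_univ_four, A, B, C, D] at hsum h₀ h₁ h₂
  fin_cases i <;> simp <;> linarith

theorem affineIndependent_ABC : AffineIndependent ℝ ![A, B, C] := by
  convert affineIndependent_ABCD.comp_embedding (Fin.castSuccEmb : Fin 3 ↪ Fin 4) using 1
  ext i : 1
  fin_cases i <;> rfl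

theorem load_mem_interior : load ∈ interior (convexHull ℝ ({A, B, C, D} : Set E3)) := by
  have h := affineIndependent_ABCD.mem_interior_convexHull (by simp)
    (w := ![161/600, 209/300, 19/600, 1/300]) (x := load)
    (by norm_num [Fin.sum_univ_four, Matrix.cons_val_two, Matrix.cons_val_three, Matrix.tail_cons,
      Matrix.head_cons])
    (by intro i; fin_cases i <;> norm_num)
    (by ext i; fin_cases i <;> norm_num [Fin.sum_univ_four, Matrix.cons_val_two,
      Matrix.cons_val_three, Matrix.tail_cons, Matrix.head_cons, A, B, C, D, load])
  simpa only [Matrix.range_cons, Matrix.range_empty, Set.union_empty, Set.singleton_union] using h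

def planeEmbedding : EuclideanSpace ℝ (Fin 2) →ₗᵢ[ℝ] E3 where
  toFun x := !₂[x 0, x 1, 0]
  map_add' x y := by ext i; fin_cases i <;> simp
  map_smul' c x := by ext i; fin_cases i <;> simp
  norm_map' x := by simp [EuclideanSpace.norm_eq, Fin.sum_univ_three, Fin.sum_univ_two]

def baseTriangle : Fin 3 → EuclideanSpace ℝ (Fin 2) := ![!₂[0, 0], !₂[9, 0], !₂[-26, 8]]

theorem planeEmbedding_comp_baseTriangle : planeEmbedding ∘ baseTriangle = ![A, B, C] := by
  ext i : 1
  fin_cases i <;> ext j <;> fin_cases j <;> simp [baseTriangle, planeEmbedding, A, B, C]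

theorem mem_interior_convexHull_baseTriangle :
    !₂[11/2, 1/4] ∈ interior (convexHull ℝ (Set.range baseTriangle)) := by
  refine (AffineIndependent.of_comp planeEmbedding.toAffineMap ?_).mem_interior_convexHull
    (by simp) (w := ![77/288, 101/144, 1/32]) ?_ ?_ ?_
  · exact planeEmbedding_comp_baseTriangle ▸ affineIndependent_ABC
  · norm_num [Fin.sum_univ_three, Matrix.cons_val_two, Matrix.tail_cons, Matrix.head_cons]
  · intro i; fin_cases i <;> norm_num
  · ext i; fin_cases i <;> norm_num [Fin.sum_univ_three, Matrix.cons_val_two, Matrix.tail_cons,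
      Matrix.head_cons, baseTriangle]

theorem stableOn_ABC : StableOn load A B C := by
  refine ⟨planeEmbedding !₂[11/2, 1/4], ?_, inner_eq_zero_of_mem_direction_affineSpan_triple ?_ ?_⟩
  · have h := planeEmbedding.toAffineIsometry.map_mem_intrinsicInterior_convexHull
      mem_interior_convexHull_baseTriangle
    rw [LinearIsometry.coe_toAffineIsometry, ← Set.range_comp,
      planeEmbedding_comp_baseTriangle] at h
    simpa only [Matrix.range_cons, Matrix.range_empty, Set.union_empty, Set.singleton_union] using h
  all_goals norm_num [PiLp.inner_apply, Fin.sum_univ_three, Matrix.cons_val_two, Matrix.tail_cons,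
    Matrix.head_cons, A, B, C, load, planeEmbedding]

theorem not_stableOn_BCD : ¬ StableOn load B C D := by
  apply not_stableOn_of_separated (n := !₂[-168, -735, -3867]) (2021/22300) (-677/22300) (-1512)
    <;> norm_num [PiLp.inner_apply, Fin.sum_univ_three, Matrix.cons_val_two, Matrix.tail_cons,
      Matrix.head_cons, B, C, D, load]

theorem not_stableOn_ACD : ¬ StableOn load A C D := by
  apply not_stableOn_of_separated (n := !₂[66, -852, -636]) (-133/7900) (479/1580) 0
    <;> norm_num [PiLp.inner_apply, Fin.sum_univ_three, Matrix.cons_val_two, Matrix.tail_cons,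
      Matrix.head_cons, A, C, D, load]

theorem not_stableOn_ABD : ¬ StableOn load A B D := by
  apply not_stableOn_of_separated (n := !₂[0, 1, -3]) (1463/2250) (-11/500) 0
    <;> norm_num [PiLp.inner_apply, Fin.sum_univ_three, Matrix.cons_val_two, Matrix.tail_cons,
      Matrix.head_cons, A, B, D, load]

end MonostableTetrahedron

open MonostableTetrahedron

/-- **Monostable tetrahedra exist**: there are four affinely independent points
`A, B, C, D` in ℝ³ and a load point `p` in the interior of their convex hull
such that the tetrahedron is stable on exactly one of its four faces. -/
theorem exists_monostable_tetrahedron :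
    ∃ A B C D p : E3,
      AffineIndependent ℝ ![A, B, C, D] ∧
      p ∈ interior (convexHull ℝ ({A, B, C, D} : Set E3)) ∧
      (∃! i : Fin 4, FaceStable A B C D p i) := by
  refine ⟨A, B, C, D, load, affineIndependent_ABCD, load_mem_interior, 3, stableOn_ABC, ?_⟩
  intro i hi
  fin_cases i
  exacts [(not_stableOn_BCD hi).elim, (not_stableOn_ACD hi).elim, (not_stableOn_ABD hi).elim, rfl]
end
end

section
/- If a tetrahedron has an obtuse path, i.e. its vertices can be labeled a, b, c, d so that the edges ab, bc and cd are all obtuse, then the tetrahedron is loadable: there exists a point p in its interior such that the tetrahedron is stable on exactly one face with load p. -/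
open RealInnerProductSpace

noncomputable section

/-! Write the foot of the perpendicular from each vertex to the plane of the opposite face in
barycentric coordinates of that face. An obtuse edge `PQ` of the tetrahedron `PQRS` says precisely
that the foot of `R` on the plane `PQS` has a negative `S`-coordinate. If the load point has
barycentric weights `w` and `α` are the weights of the foot of a vertex `x`, then the foot of the
load point on the face opposite `x` has weights `w v + w x * α v`; the tetrahedron is stable on
that face if these are all positive and unstable if one of them is negative. Taking
`w b ≪ w a ≪ w d ≪ w c`, the obtuse edges `ab`, `cd`, `bc` make the faces `abd`, `bcd`, `abc`
unstable, while on `acd` the small weight of `b` cannot spoil positivity. -/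

open Set

theorem Matrix.range_cons_cons_cons_empty {α : Type*} (x y z : α) :
    range ![x, y, z] = {x, y, z} := by
  simp only [Matrix.range_cons, Matrix.range_empty, singleton_union, union_empty]

theorem Matrix.range_cons_cons_cons_cons_empty {α : Type*} (x y z w : α) :
    range ![x, y, z, w] = {x, y, z, w} := by
  simp only [Matrix.range_cons, Matrix.range_empty, singleton_union, union_empty]

theorem Finset.univ_affineCombination_fin_three {V : Type*} [AddCommGroup V] [Module ℝ V]
    (v₁ v₂ v₃ : V) {w₁ w₂ w₃ : ℝ} (hw : w₁ + w₂ + w₃ = 1) :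
    Finset.univ.affineCombination ℝ ![v₁, v₂, v₃] ![w₁, w₂, w₃] = w₁ • v₁ + w₂ • v₂ + w₃ • v₃ := by
  rw [Finset.univ.affineCombination_eq_linear_combination _ _ (by simpa [Fin.sum_univ_three]),
    Fin.sum_univ_three]
  rfl

theorem AffineIndependent.faces {V : Type*} [AddCommGroup V] [Module ℝ V] {a b c d : V}
    (h : AffineIndependent ℝ ![a, b, c, d]) :
    AffineIndependent ℝ ![b, c, d] ∧ AffineIndependent ℝ ![a, c, d] ∧
      AffineIndependent ℝ ![a, b, d] ∧ AffineIndependent ℝ ![a, b, c] := by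
  have face (i j k : Fin 4) (hf : Function.Injective ![i, j, k]) :
      AffineIndependent ℝ ![![a, b, c, d] i, ![a, b, c, d] j, ![a, b, c, d] k] := by
    convert h.comp_embedding ⟨_, hf⟩ using 1
    funext m
    fin_cases m <;> rfl
  exact ⟨face 1 2 3 (by decide), face 0 2 3 (by decide), face 0 1 3 (by decide),
    face 0 1 2 (by decide)⟩

theorem AffineIndependent.affineCombination_mem_interior_convexHull
    {ι V : Type*} [Fintype ι] [NormedAddCommGroup V] [NormedSpace ℝ V] [FiniteDimensional ℝ V]
    {p : ι → V} (hp : AffineIndependent ℝ p) (hcard : Fintype.card ι = Module.finrank ℝ V + 1)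
    {w : ι → ℝ} (hw : ∑ i, w i = 1) (hpos : ∀ i, 0 < w i) :
    Finset.univ.affineCombination ℝ p w ∈ interior (convexHull ℝ (range p)) := by
  let b : AffineBasis ι ℝ V := ⟨p, hp, hp.affineSpan_eq_top_iff_card_eq_finrank_add_one.2 hcard⟩
  change Finset.univ.affineCombination ℝ b w ∈ interior (convexHull ℝ (range b))
  rw [b.interior_convexHull]
  intro i
  rw [b.coord_apply_combination_of_mem (Finset.mem_univ i) hw]
  exact hpos i

theorem AffineIndependent.affineCombination_mem_intrinsicInterior_convexHull
    {ι V : Type*} [Fintype ι] [NormedAddCommGroup V] [NormedSpace ℝ V] {p : ι → V}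
    (hp : AffineIndependent ℝ p) {w : ι → ℝ} (hw : ∑ i, w i = 1) (hpos : ∀ i, 0 < w i) :
    Finset.univ.affineCombination ℝ p w ∈ intrinsicInterior ℝ (convexHull ℝ (range p)) := by
  have : Nonempty ι := by
    by_contra h
    simp [not_nonempty_iff.mp h] at hw
  let i₀ : ι := Classical.arbitrary ι
  -- Transport to the direction of the span, where the points form an affine basis.
  set W := vectorSpan ℝ (range p)
  let φ : W →ᵃⁱ[ℝ] V :=
    (AffineIsometryEquiv.constVAdd ℝ V (p i₀)).toAffineIsometry.comp W.subtypeₗᵢ.toAffineIsometry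
  let q : ι → W := fun i =>
    ⟨p i -ᵥ p i₀, vsub_mem_vectorSpan ℝ (mem_range_self i) (mem_range_self i₀)⟩
  have hφq : φ ∘ q = p := by funext i; simp [φ, q]
  have hq : AffineIndependent ℝ q := .of_comp φ.toAffineMap (by simpa [hφq])
  have hcard : Fintype.card ι = Module.finrank ℝ W + 1 := by
    rw [hp.finrank_vectorSpan (Nat.succ_pred_eq_of_pos Fintype.card_pos).symm]
    exact (Nat.succ_pred_eq_of_pos Fintype.card_pos).symm
  let b : AffineBasis ι ℝ W := ⟨q, hq, hq.affineSpan_eq_top_iff_card_eq_finrank_add_one.2 hcard⟩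
  have hint : Finset.univ.affineCombination ℝ q w ∈ interior (convexHull ℝ (range b)) := by
    rw [b.interior_convexHull]
    intro i
    change 0 < b.coord i (Finset.univ.affineCombination ℝ b w)
    rw [b.coord_apply_combination_of_mem (Finset.mem_univ i) hw]
    exact hpos i
  have himage : φ '' convexHull ℝ (range q) = convexHull ℝ (range p) := by
    rw [← AffineIsometry.coe_toAffineMap, AffineMap.image_convexHull, ← range_comp,
      AffineIsometry.coe_toAffineMap, hφq]
  rw [← himage, AffineIsometry.intrinsicInterior_image]
  refine ⟨_, interior_subset_intrinsicInterior hint, ?_⟩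
  rw [← AffineIsometry.coe_toAffineMap, Finset.map_affineCombination _ _ _ hw,
    AffineIsometry.coe_toAffineMap, hφq]

theorem EuclideanGeometry.eq_of_vsub_mem_direction_orthogonal {V P : Type*}
    [NormedAddCommGroup V] [InnerProductSpace ℝ V] [MetricSpace P] [NormedAddTorsor V P]
    {s : AffineSubspace ℝ P} [s.direction.HasOrthogonalProjection] {p q q' : P}
    (hq : q ∈ s) (hq' : q' ∈ s) (h : p -ᵥ q ∈ s.directionᗮ) (h' : p -ᵥ q' ∈ s.directionᗮ) :
    q = q' := by
  have : Nonempty s := ⟨⟨q, hq⟩⟩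
  rw [← coe_orthogonalProjection_eq_iff_mem.2 ⟨hq, h⟩,
    ← coe_orthogonalProjection_eq_iff_mem.2 ⟨hq', h'⟩]

section InnerProductSpace

variable {F : Type*} [NormedAddCommGroup F] [InnerProductSpace ℝ F]

theorem coeff_neg_of_inner_perp_neg {u v n x : F} {s t : ℝ} (hx : x = s • u + t • v + n)
    (hnu : ⟪n, u⟫ = 0) (hnv : ⟪n, v⟫ = 0)
    (h : ⟪x - (⟪x, u⟫ / ⟪u, u⟫) • u, v - (⟪v, u⟫ / ⟪u, u⟫) • u⟫ < 0) : t < 0 := by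
  set v' := v - (⟪v, u⟫ / ⟪u, u⟫) • u
  have hx' : x - (⟪x, u⟫ / ⟪u, u⟫) • u = t • v' + n := by
    rcases eq_or_ne u 0 with rfl | hu
    · simp [hx, v']
    have hcoef : ⟪x, u⟫ / ⟪u, u⟫ = s + t * (⟪v, u⟫ / ⟪u, u⟫) := by
      rw [hx, inner_add_left, inner_add_left, real_inner_smul_left, real_inner_smul_left, hnu]
      field_simp [inner_self_ne_zero.2 hu]
      ring
    rw [hcoef, hx]
    module
  have hnv' : ⟪n, v'⟫ = 0 := by
    simp [v', inner_sub_right, real_inner_smul_right, hnu, hnv]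
  rw [hx', inner_add_left, real_inner_smul_left, hnv', add_zero] at h
  exact neg_of_mul_neg_left h real_inner_self_nonneg

end InnerProductSpace

open Filter Topology in
theorem exists_load_weights {α β γ δ₁ δ₂ δ₃ : ℝ} (hα : α < 0) (hβ : β < 0) (hγ : γ < 0) :
    ∃ wa wb wc wd : ℝ, wa + wb + wc + wd = 1 ∧ 0 < wa ∧ 0 < wb ∧ 0 < wc ∧ 0 < wd ∧
      wd + wc * α < 0 ∧ wb + wa * β < 0 ∧ wa + wd * γ < 0 ∧
      0 < wa + wb * δ₁ ∧ 0 < wc + wb * δ₂ ∧ 0 < wd + wb * δ₃ := by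
  have hnear : ∀ᶠ ε in 𝓝 (0 : ℝ), 0 < 1 - ε - ε ^ 2 - ε ^ 3 ∧
      ε + (1 - ε - ε ^ 2 - ε ^ 3) * α < 0 ∧ ε + β < 0 ∧ ε + γ < 0 ∧
      0 < 1 + ε * δ₁ ∧ 0 < 1 - ε - ε ^ 2 - ε ^ 3 + ε ^ 3 * δ₂ ∧ 0 < 1 + ε ^ 2 * δ₃ := by
    refine (ContinuousAt.eventually_lt (by fun_prop) (by fun_prop) (by norm_num)).and <|
      (ContinuousAt.eventually_lt (by fun_prop) (by fun_prop) (by simpa)).and <|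
      (ContinuousAt.eventually_lt (by fun_prop) (by fun_prop) (by simpa)).and <|
      (ContinuousAt.eventually_lt (by fun_prop) (by fun_prop) (by simpa)).and <|
      (ContinuousAt.eventually_lt (by fun_prop) (by fun_prop) (by norm_num)).and <|
      (ContinuousAt.eventually_lt (by fun_prop) (by fun_prop) (by norm_num)).and <|
      (ContinuousAt.eventually_lt (by fun_prop) (by fun_prop) (by norm_num))
  obtain ⟨ε, ⟨hwc, hα', hβ', hγ', hδ₁, hδ₂, hδ₃⟩, hε : 0 < ε⟩ :=
    ((hnear.filter_mono (nhdsWithin_le_nhds (s := Ioi 0))).and self_mem_nhdsWithin).exists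
  refine ⟨ε ^ 2, ε ^ 3, 1 - ε - ε ^ 2 - ε ^ 3, ε, by ring, by positivity, by positivity, hwc, hε,
    hα', ?_, ?_, ?_, hδ₂, ?_⟩
  · linear_combination mul_neg_of_pos_of_neg (pow_pos hε 2) hβ'
  · linear_combination mul_neg_of_pos_of_neg hε hγ'
  · linear_combination mul_pos (pow_pos hε 2) hδ₁
  · linear_combination mul_pos hε hδ₃

theorem stableOn_iff_mem_intrinsicInterior {p q v₁ v₂ v₃ : E3}
    (hq : q ∈ affineSpan ℝ {v₁, v₂, v₃}) (hpq : p - q ∈ (affineSpan ℝ {v₁, v₂, v₃}).directionᗮ) :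
    StableOn p v₁ v₂ v₃ ↔ q ∈ intrinsicInterior ℝ (convexHull ℝ {v₁, v₂, v₃}) := by
  simp only [StableOn, ← Submodule.mem_orthogonal']
  refine ⟨fun ⟨q', hq', hpq'⟩ => ?_, fun h => ⟨q, h, hpq⟩⟩
  have hq'_mem := convexHull_subset_affineSpan _ (intrinsicInterior_subset hq')
  rwa [EuclideanGeometry.eq_of_vsub_mem_direction_orthogonal hq hq'_mem hpq hpq']

theorem stableOn_iff_foot_mem {x n v₁ v₂ v₃ : E3} {α₁ α₂ α₃ w₁ w₂ w₃ w₄ : ℝ}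
    (hn : n ∈ (affineSpan ℝ {v₁, v₂, v₃}).directionᗮ) (hα : α₁ + α₂ + α₃ = 1)
    (hx : x = α₁ • v₁ + α₂ • v₂ + α₃ • v₃ + n) (hw : w₁ + w₂ + w₃ + w₄ = 1) :
    StableOn (w₁ • v₁ + w₂ • v₂ + w₃ • v₃ + w₄ • x) v₁ v₂ v₃ ↔
      (w₁ + w₄ * α₁) • v₁ + (w₂ + w₄ * α₂) • v₂ + (w₃ + w₄ * α₃) • v₃ ∈
        intrinsicInterior ℝ (convexHull ℝ {v₁, v₂, v₃}) := by
  have hsum : (w₁ + w₄ * α₁) + (w₂ + w₄ * α₂) + (w₃ + w₄ * α₃) = 1 := by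
    linear_combination w₄ * hα + hw
  refine stableOn_iff_mem_intrinsicInterior ?_ ?_
  · rw [← Matrix.range_cons_cons_cons_empty, ← Finset.univ_affineCombination_fin_three _ _ _ hsum]
    exact affineCombination_mem_affineSpan (by simpa [Fin.sum_univ_three]) _
  · convert Submodule.smul_mem _ w₄ hn using 1
    rw [hx]
    module

theorem stableOn_of_pos {x n v₁ v₂ v₃ : E3} {α₁ α₂ α₃ w₁ w₂ w₃ w₄ : ℝ}
    (hv : AffineIndependent ℝ ![v₁, v₂, v₃]) (hn : n ∈ (affineSpan ℝ {v₁, v₂, v₃}).directionᗮ)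
    (hα : α₁ + α₂ + α₃ = 1) (hx : x = α₁ • v₁ + α₂ • v₂ + α₃ • v₃ + n)
    (hw : w₁ + w₂ + w₃ + w₄ = 1)
    (h₁ : 0 < w₁ + w₄ * α₁) (h₂ : 0 < w₂ + w₄ * α₂) (h₃ : 0 < w₃ + w₄ * α₃) :
    StableOn (w₁ • v₁ + w₂ • v₂ + w₃ • v₃ + w₄ • x) v₁ v₂ v₃ := by
  have hsum : (w₁ + w₄ * α₁) + (w₂ + w₄ * α₂) + (w₃ + w₄ * α₃) = 1 := by
    linear_combination w₄ * hα + hw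
  rw [stableOn_iff_foot_mem hn hα hx hw, ← Matrix.range_cons_cons_cons_empty,
    ← Finset.univ_affineCombination_fin_three _ _ _ hsum]
  refine hv.affineCombination_mem_intrinsicInterior_convexHull
    (by simpa [Fin.sum_univ_three]) fun i => ?_
  fin_cases i <;> assumption

theorem not_stableOn_of_neg {x n v₁ v₂ v₃ : E3} {α₁ α₂ α₃ w₁ w₂ w₃ w₄ : ℝ}
    (hv : AffineIndependent ℝ ![v₁, v₂, v₃]) (hn : n ∈ (affineSpan ℝ {v₁, v₂, v₃}).directionᗮ)
    (hα : α₁ + α₂ + α₃ = 1) (hx : x = α₁ • v₁ + α₂ • v₂ + α₃ • v₃ + n)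
    (hw : w₁ + w₂ + w₃ + w₄ = 1)
    (hneg : w₁ + w₄ * α₁ < 0 ∨ w₂ + w₄ * α₂ < 0 ∨ w₃ + w₄ * α₃ < 0) :
    ¬ StableOn (w₁ • v₁ + w₂ • v₂ + w₃ • v₃ + w₄ • x) v₁ v₂ v₃ := by
  have hsum : (w₁ + w₄ * α₁) + (w₂ + w₄ * α₂) + (w₃ + w₄ * α₃) = 1 := by
    linear_combination w₄ * hα + hw
  let s : Affine.Simplex ℝ E3 2 := ⟨_, hv⟩
  rw [stableOn_iff_foot_mem hn hα hx hw, ← Matrix.range_cons_cons_cons_empty,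
    ← Finset.univ_affineCombination_fin_three _ _ _ hsum]
  intro hmem
  have hhull := intrinsicInterior_subset hmem
  rw [show ![v₁, v₂, v₃] = s.points from rfl, s.convexHull_eq_closedInterior,
    Affine.Simplex.affineCombination_mem_closedInterior_iff (by simpa [Fin.sum_univ_three])]
    at hhull
  rcases hneg with h | h | h
  exacts [(hhull 0).1.not_gt h, (hhull 1).1.not_gt h, (hhull 2).1.not_gt h]

theorem exists_eq_add_mem_direction_orthogonal (v₁ v₂ v₃ x : E3) :
    ∃ w₁ w₂ w₃ : ℝ, ∃ n ∈ (affineSpan ℝ {v₁, v₂, v₃}).directionᗮ,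
      w₁ + w₂ + w₃ = 1 ∧ x = w₁ • v₁ + w₂ • v₂ + w₃ • v₃ + n := by
  rw [← Matrix.range_cons_cons_cons_empty]
  set s := affineSpan ℝ (range ![v₁, v₂, v₃])
  obtain ⟨w, hw, hfoot_eq⟩ := eq_affineCombination_of_mem_affineSpan_of_fintype
    (EuclideanGeometry.orthogonalProjection_mem (s := s) x)
  refine ⟨w 0, w 1, w 2, _,
    EuclideanGeometry.vsub_orthogonalProjection_mem_direction_orthogonal s x,
    by simpa [Fin.sum_univ_three] using hw, ?_⟩
  rw [vsub_eq_sub, hfoot_eq, Finset.univ.affineCombination_eq_linear_combination _ _ hw,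
    Fin.sum_univ_three]
  simp

theorem ObtuseEdge.symm {P Q R S : E3} (h : ObtuseEdge P Q R S) : ObtuseEdge P Q S R := by
  rwa [ObtuseEdge, real_inner_comm]

theorem ObtuseEdge.coeff_neg {P Q R S n : E3} {s : Set E3} {α β γ : ℝ} (h : ObtuseEdge P Q R S)
    (hP : P ∈ s) (hQ : Q ∈ s) (hS : S ∈ s) (hn : n ∈ (affineSpan ℝ s).directionᗮ)
    (hw : α + β + γ = 1) (hR : R = α • P + β • Q + γ • S + n) : γ < 0 := by
  have horth {X Y : E3} (hX : X ∈ s) (hY : Y ∈ s) : ⟪n, Y - X⟫ = 0 :=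
    Submodule.inner_left_of_mem_orthogonal
      (AffineSubspace.vsub_mem_direction (mem_affineSpan ℝ hY) (mem_affineSpan ℝ hX)) hn
  refine coeff_neg_of_inner_perp_neg (s := β) ?_ (horth hP hQ) (horth hP hS) h
  rw [hR, show α = 1 - β - γ by linarith]
  module

theorem mem_interior_convexHull_tetrahedron {a b c d : E3} (h : AffineIndependent ℝ ![a, b, c, d])
    {w₁ w₂ w₃ w₄ : ℝ} (hw : w₁ + w₂ + w₃ + w₄ = 1)
    (h₁ : 0 < w₁) (h₂ : 0 < w₂) (h₃ : 0 < w₃) (h₄ : 0 < w₄) :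
    w₁ • a + w₂ • b + w₃ • c + w₄ • d ∈ interior (convexHull ℝ {a, b, c, d}) := by
  have hsum : ∑ i, ![w₁, w₂, w₃, w₄] i = 1 := by simpa [Fin.sum_univ_four] using hw
  have hint := h.affineCombination_mem_interior_convexHull (by simp) hsum fun i => by
    fin_cases i <;> assumption
  rwa [Finset.univ.affineCombination_eq_linear_combination _ _ hsum, Fin.sum_univ_four,
    Matrix.range_cons_cons_cons_cons_empty] at hint

/-- **A tetrahedron with an obtuse path is loadable**: if the edges `ab`, `bc`,
`cd` of the tetrahedron `abcd` are all obtuse, then there is a point `p` in the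
interior of the tetrahedron such that the tetrahedron with load `p` is stable on
exactly one face. -/
theorem obtuse_path_tetrahedron_is_loadable (a b c d : E3)
    (h : AffineIndependent ℝ ![a, b, c, d])
    (hab : ObtuseEdge a b c d) (hbc : ObtuseEdge b c a d) (hcd : ObtuseEdge c d a b) :
    ∃ p ∈ interior (convexHull ℝ ({a, b, c, d} : Set E3)),
      ∃! i : Fin 4, FaceStable a b c d p i := by
  obtain ⟨h_bcd, h_acd, h_abd, h_abc⟩ := h.faces
  obtain ⟨a₁, a₂, a₃, na, hna, hsa, ha⟩ := exists_eq_add_mem_direction_orthogonal b c d a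
  obtain ⟨b₁, b₂, b₃, nb, hnb, hsb, hb⟩ := exists_eq_add_mem_direction_orthogonal a c d b
  obtain ⟨c₁, c₂, c₃, nc, hnc, hsc, hc⟩ := exists_eq_add_mem_direction_orthogonal a b d c
  obtain ⟨d₁, d₂, d₃, nd, hnd, hsd, hd⟩ := exists_eq_add_mem_direction_orthogonal a b c d
  have hc₃ : c₃ < 0 := hab.coeff_neg (by simp) (by simp) (by simp) hnc hsc hc
  have ha₁ : a₁ < 0 := hcd.coeff_neg (α := a₂) (β := a₃) (by simp) (by simp) (by simp) hna
    (by linarith) (by rw [ha]; abel)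
  have hd₁ : d₁ < 0 := hbc.symm.coeff_neg (α := d₂) (β := d₃) (by simp) (by simp) (by simp) hnd
    (by linarith) (by rw [hd]; abel)
  obtain ⟨wa, wb, wc, wd, hw, hwa, hwb, hwc, hwd, hneg_d, hneg_b, hneg_a, hpos_a, hpos_c, hpos_d⟩ :=
    exists_load_weights (δ₁ := b₁) (δ₂ := b₂) (δ₃ := b₃) hc₃ ha₁ hd₁
  have h₀ : ¬ StableOn (wa • a + wb • b + wc • c + wd • d) b c d := by
    rw [show wa • a + wb • b + wc • c + wd • d = wb • b + wc • c + wd • d + wa • a by abel]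
    exact not_stableOn_of_neg h_bcd hna hsa ha (by linarith) (Or.inl hneg_b)
  have h₁ : StableOn (wa • a + wb • b + wc • c + wd • d) a c d := by
    rw [show wa • a + wb • b + wc • c + wd • d = wa • a + wc • c + wd • d + wb • b by abel]
    exact stableOn_of_pos h_acd hnb hsb hb (by linarith) hpos_a hpos_c hpos_d
  have h₂ : ¬ StableOn (wa • a + wb • b + wc • c + wd • d) a b d := by
    rw [show wa • a + wb • b + wc • c + wd • d = wa • a + wb • b + wd • d + wc • c by abel]
    exact not_stableOn_of_neg h_abd hnc hsc hc (by linarith) (Or.inr (Or.inr hneg_d))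
  have h₃ : ¬ StableOn (wa • a + wb • b + wc • c + wd • d) a b c :=
    not_stableOn_of_neg h_abc hnd hsd hd hw (Or.inl hneg_a)
  refine ⟨_, mem_interior_convexHull_tetrahedron h hw hwa hwb hwc hwd, 1, h₁, fun j hj => ?_⟩
  fin_cases j
  exacts [absurd hj h₀, rfl, absurd hj h₂, absurd hj h₃]
end
end

section
/- Let a, b, c, d be the vertices of a tetrahedron whose edges ab, bc and cd are all obtuse, and let A, B, C, D denote the faces opposite a, b, c, d respectively (so that C and D share edge ab, D and A share edge bc, and A and B share edge cd). Then for each face S among A, B, C, D there exists a point p in the interior of the tetrahedron such that the tetrahedron with load p is stable on S and on no other face, and each face other than S tips over the shared edge onto the next face along the chain C–D–A–B in the direction of S; in particular all four falling patterns C→D→A→B, C→D→A←B, C→D←A←B, and C←D←A←B are realizable by appropriate choice of the load point. -/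
open RealInnerProductSpace

noncomputable section

/-- The four falling patterns along the face chain `C–D–A–B` of the tetrahedron
`abcd`, where `A = bcd`, `B = acd`, `C = abd`, `D = abc` are the faces opposite
`a, b, c, d` (so `C, D` share edge `ab`, `D, A` share `bc`, and `A, B` share `cd`).
The pattern with index `k` has the `k`-th face of the chain `C, D, A, B` as its
unique stable (sink) face, and every other face tips over the shared edge onto
the next face along the chain in the direction of the sink:
`0 ↦ C←D←A←B`, `1 ↦ C→D←A←B`, `2 ↦ C→D→A←B`, `3 ↦ C→D→A→B`. -/
def FallingPattern (a b c d p : E3) : Fin 4 → Prop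
  | 0 => -- sink C : C←D←A←B
      StableOn p a b d ∧ ¬ StableOn p a b c ∧ ¬ StableOn p b c d ∧ ¬ StableOn p a c d ∧
      TipsOver p c a b ∧ TipsOver p d b c ∧ TipsOver p a c d
  | 1 => -- sink D : C→D←A←B
      StableOn p a b c ∧ ¬ StableOn p a b d ∧ ¬ StableOn p b c d ∧ ¬ StableOn p a c d ∧
      TipsOver p d a b ∧ TipsOver p d b c ∧ TipsOver p a c d
  | 2 => -- sink A : C→D→A←B
      StableOn p b c d ∧ ¬ StableOn p a b d ∧ ¬ StableOn p a b c ∧ ¬ StableOn p a c d ∧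
      TipsOver p d a b ∧ TipsOver p a b c ∧ TipsOver p a c d
  | 3 => -- sink B : C→D→A→B
      StableOn p a c d ∧ ¬ StableOn p a b d ∧ ¬ StableOn p a b c ∧ ¬ StableOn p b c d ∧
      TipsOver p d a b ∧ TipsOver p a b c ∧ TipsOver p b c d

/-!
Everything is expressed through the inward normal `n = edgeNormal P Q S` of the edge `PQ` inside
the face `SPQ`: the face tips over `PQ` as soon as `⟪p - P, n⟫ < 0`, and is then not stable.
The functional `⟪· - P, n⟫` vanishes at `P` and `Q`, and it is negative at the fourth vertex
exactly when the edge `PQ` is obtuse.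

For each sink face we order its vertices `v₀, v₁, v₂` so that each of the three required tipping
functionals has lexicographically negative values at `(v₀, v₁, v₂)`; this is where the
obtuseness of `ab`, `bc` and `cd` enters. All three are then negative at
`q = (1 - t - t²) v₀ + t v₁ + t² v₂` for small `t > 0`, a point of the relative interior of the
face. Stability on the face and the tipping inequalities are open conditions near `q`, so they
hold at some point of the interior of the tetrahedron close to `q`.
-/

open Filter Topology

section InnerProductSpace

variable {E : Type*} [NormedAddCommGroup E] [InnerProductSpace ℝ E]

-- The inward normal of the edge `PQ` within the face `SPQ`; `ObtuseEdge P Q R S` unfolds to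
-- `⟪edgeNormal P Q R, edgeNormal P Q S⟫ < 0`.
def edgeNormal (P Q S : E) : E :=
  (S - P) - (⟪S - P, Q - P⟫ / ⟪Q - P, Q - P⟫) • (Q - P)

lemma inner_sub_edgeNormal_eq_zero (P Q S : E) : ⟪Q - P, edgeNormal P Q S⟫ = 0 := by
  by_cases h : Q - P = 0
  · simp [h]
  · rw [edgeNormal, inner_sub_right, real_inner_smul_right,
      div_mul_cancel₀ _ (inner_self_ne_zero.2 h), real_inner_comm, sub_self]

lemma inner_sub_edgeNormal (P Q S X : E) :
    ⟪X - P, edgeNormal P Q S⟫ = ⟪edgeNormal P Q X, edgeNormal P Q S⟫ := by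
  conv_rhs => rw [edgeNormal, inner_sub_left, real_inner_smul_left,
    inner_sub_edgeNormal_eq_zero, mul_zero, sub_zero]

lemma inner_sub_edgeNormal_eq_zero_of_mem_line {P Q S x : E} (hx : x ∈ line[ℝ, P, Q]) :
    ⟪x - P, edgeNormal P Q S⟫ = 0 := by
  obtain ⟨r, hr⟩ := vadd_left_mem_affineSpan_pair.1 (show (x - P) +ᵥ P ∈ line[ℝ, P, Q] by simpa)
  rw [← hr, vsub_eq_sub, real_inner_smul_left, inner_sub_edgeNormal_eq_zero, mul_zero]

lemma edgeNormal_ne_zero {P Q S : E} (hS : S ∉ line[ℝ, P, Q]) : edgeNormal P Q S ≠ 0 := by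
  intro h
  refine hS ?_
  have : (S - P) +ᵥ P ∈ line[ℝ, P, Q] :=
    vadd_left_mem_affineSpan_pair.2 ⟨_, (sub_eq_zero.1 h).symm⟩
  simpa using this

lemma inner_sub_edgeNormal_self_pos {P Q S : E} (hS : S ∉ line[ℝ, P, Q]) :
    0 < ⟪S - P, edgeNormal P Q S⟫ := by
  rw [inner_sub_edgeNormal]
  exact real_inner_self_pos.2 (edgeNormal_ne_zero hS)

lemma edgeNormal_mem_direction (P Q S : E) :
    edgeNormal P Q S ∈ (affineSpan ℝ {S, P, Q}).direction := by
  have hmem : ∀ X ∈ ({S, P, Q} : Set E), X - P ∈ (affineSpan ℝ {S, P, Q}).direction :=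
    fun X hX ↦ AffineSubspace.vsub_mem_direction (subset_affineSpan ℝ _ hX)
      (subset_affineSpan ℝ _ (by simp))
  exact Submodule.sub_mem _ (hmem S (by simp)) (Submodule.smul_mem _ _ (hmem Q (by simp)))

lemma mem_line_of_inner_sub_edgeNormal_eq_zero {P Q S x : E} (hS : S ∉ line[ℝ, P, Q])
    (hx : x ∈ affineSpan ℝ {S, P, Q}) (h0 : ⟪x - P, edgeNormal P Q S⟫ = 0) :
    x ∈ line[ℝ, P, Q] := by
  rw [← affineSpan_insert_affineSpan, AffineSubspace.mem_affineSpan_insert_iff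
    (left_mem_affineSpan_pair ℝ P Q)] at hx
  obtain ⟨r, p₀, hp₀, rfl⟩ := hx
  have hr : r * ⟪S - P, edgeNormal P Q S⟫ = 0 := by
    rw [← h0, vadd_eq_add, add_sub_assoc, inner_add_left, real_inner_smul_left,
      inner_sub_edgeNormal_eq_zero_of_mem_line hp₀, add_zero, vsub_eq_sub]
  rw [(mul_eq_zero.1 hr).resolve_right (inner_sub_edgeNormal_self_pos hS).ne', zero_smul,
    zero_vadd]
  exact hp₀

lemma inner_sub_edgeNormal_eq_of_forall_inner_eq_zero {p q P Q S : E}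
    (horth : ∀ w ∈ (affineSpan ℝ {S, P, Q}).direction, ⟪p - q, w⟫ = 0) :
    ⟪q - P, edgeNormal P Q S⟫ = ⟪p - P, edgeNormal P Q S⟫ := by
  have := horth _ (edgeNormal_mem_direction P Q S)
  rw [← sub_sub_sub_cancel_right p q P, inner_sub_left] at this
  linarith

lemma inner_sub_orthogonalProjection_eq_zero (s : AffineSubspace ℝ E) [Nonempty s]
    [s.direction.HasOrthogonalProjection] (p : E) {w : E} (hw : w ∈ s.direction) :
    ⟪p - EuclideanGeometry.orthogonalProjection s p, w⟫ = 0 := by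
  rw [real_inner_comm]
  exact Submodule.inner_right_of_mem_orthogonal hw
    (EuclideanGeometry.vsub_orthogonalProjection_mem_direction_orthogonal s p)

end InnerProductSpace

lemma AffineIndependent.notMem_affineSpan_pair {ι k V P : Type*} [Ring k] [Nontrivial k]
    [AddCommGroup V] [Module k V] [AddTorsor V P] {p : ι → P} (h : AffineIndependent k p)
    {i j l : ι} (hj : i ≠ j) (hl : i ≠ l) : p i ∉ line[k, p j, p l] := by
  rw [← Set.image_pair, h.mem_affineSpan_iff]
  simp [hj, hl]

lemma mem_intrinsicInterior_of_isOpen {E : Type*} [NormedAddCommGroup E] [NormedSpace ℝ E]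
    {s U : Set E} {x : E} (hU : IsOpen U) (hxU : x ∈ U) (hx : x ∈ s)
    (hUs : U ∩ affineSpan ℝ s ⊆ s) : x ∈ intrinsicInterior ℝ s := by
  refine mem_intrinsicInterior.2 ⟨⟨x, subset_affineSpan ℝ s hx⟩, ?_, rfl⟩
  exact interior_maximal (fun (y : affineSpan ℝ s) (hy : (y : E) ∈ U) ↦ hUs ⟨hy, y.2⟩)
    (hU.preimage continuous_subtype_val) hxU

lemma AffineBasis.affineCombination_mem_intrinsicInterior_convexHull_image {ι E : Type*}
    [Fintype ι] [NormedAddCommGroup E] [NormedSpace ℝ E] [FiniteDimensional ℝ E]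
    (T : AffineBasis ι ℝ E) {s : Finset ι} {w : ι → ℝ} (hw : ∑ i ∈ s, w i = 1)
    (hpos : ∀ i ∈ s, 0 < w i) :
    s.affineCombination ℝ T w ∈ intrinsicInterior ℝ (convexHull ℝ (T '' s)) := by
  classical
  have hU : IsOpen {y | ∀ i ∈ s, 0 < T.coord i y} := by
    simp only [Set.ofPred_forall]
    exact isOpen_biInter_finset fun i _ ↦
      isOpen_lt continuous_const (continuous_barycentric_coord T i)
  have hx : s.affineCombination ℝ T w ∈ convexHull ℝ (T '' s) := by
    rw [affineCombination_eq_centerMass hw]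
    exact s.centerMass_mem_convexHull (fun i hi ↦ (hpos i hi).le) (by simp [hw])
      fun i hi ↦ ⟨i, hi, rfl⟩
  refine mem_intrinsicInterior_of_isOpen hU
    (fun i hi ↦ by rw [T.coord_apply_combination_of_mem hi hw]; exact hpos i hi) hx ?_
  rintro y ⟨hy, hys⟩
  rw [affineSpan_convexHull] at hys
  have hzero : ∀ j ∉ s, T.coord j y = 0 := fun j hj ↦
    AffineMap.eqOn_affineSpan (g := AffineMap.const ℝ E (0 : ℝ))
      (by rintro _ ⟨i, hi, rfl⟩; simp [T.coord_apply_ne (ne_of_mem_of_not_mem hi hj).symm]) hys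
  rw [← T.linear_combination_coord_eq_self y,
    ← Finset.sum_subset (Finset.subset_univ s) fun j _ hj ↦ by simp [hzero j hj]]
  refine (convex_convexHull ℝ _).sum_mem (fun i hi ↦ (hy i hi).le) ?_
    fun i hi ↦ subset_convexHull ℝ _ ⟨i, hi, rfl⟩
  rw [Finset.sum_subset (Finset.subset_univ s) fun j _ hj ↦ hzero j hj, T.sum_coord_apply_eq_one]

lemma Convex.exists_mem_interior_of_eventually {E : Type*} [NormedAddCommGroup E]
    [NormedSpace ℝ E] {K : Set E} (hK : Convex ℝ K) (hint : (interior K).Nonempty) {q : E}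
    (hq : q ∈ K) {P : E → Prop} (h : ∀ᶠ p in 𝓝 q, P p) : ∃ p ∈ interior K, P p := by
  have hcl : q ∈ closure (interior K) := by
    rw [hK.closure_interior_eq_closure_of_nonempty_interior hint]
    exact subset_closure hq
  obtain ⟨p, hp, hpK⟩ := (h.and_frequently (mem_closure_iff_frequently.1 hcl)).exists
  exact ⟨p, hpK, hp⟩

lemma eventually_lex_neg {a b c : ℝ} (h : a < 0 ∨ a = 0 ∧ (b < 0 ∨ b = 0 ∧ c < 0)) :
    ∀ᶠ t in 𝓝[>] (0 : ℝ), (1 - t - t ^ 2) * a + t * b + t ^ 2 * c < 0 := by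
  rcases h with ha | ⟨rfl, hb | ⟨rfl, hc⟩⟩
  · have hlim : Tendsto (fun t : ℝ ↦ (1 - t - t ^ 2) * a + t * b + t ^ 2 * c) (𝓝 0) (𝓝 a) :=
      Continuous.tendsto' (by fun_prop) _ _ (by simp)
    exact nhdsWithin_le_nhds (hlim.eventually (gt_mem_nhds ha))
  · have hlim : Tendsto (fun t : ℝ ↦ b + t * c) (𝓝 0) (𝓝 b) :=
      Continuous.tendsto' (by fun_prop) _ _ (by simp)
    filter_upwards [self_mem_nhdsWithin, nhdsWithin_le_nhds (hlim.eventually (gt_mem_nhds hb))]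
      with t (ht : 0 < t) hbt
    nlinarith
  · filter_upwards [self_mem_nhdsWithin] with t (ht : 0 < t)
    simpa using mul_neg_of_pos_of_neg (pow_pos ht 2) hc

section Tetrahedron

variable {p P Q R S x y z v₁ v₂ v₃ : E3}

lemma ObtuseEdge.inner_sub_edgeNormal_neg (h : ObtuseEdge P Q R S) :
    ⟪R - P, edgeNormal P Q S⟫ < 0 := by
  rwa [inner_sub_edgeNormal]

lemma ObtuseEdge.inner_sub_edgeNormal_neg' (h : ObtuseEdge P Q R S) :
    ⟪S - P, edgeNormal P Q R⟫ < 0 := by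
  rwa [inner_sub_edgeNormal, real_inner_comm]

lemma tipsOver_of_inner_sub_edgeNormal_neg (hS : S ∉ line[ℝ, P, Q])
    (h : ⟪p - P, edgeNormal P Q S⟫ < 0) : TipsOver p S P Q := by
  set plane := affineSpan ℝ ({S, P, Q} : Set E3)
  set n := edgeNormal P Q S
  have : Nonempty plane := ⟨⟨S, subset_affineSpan ℝ _ (by simp)⟩⟩
  set q : E3 := (EuclideanGeometry.orthogonalProjection plane p : E3)
  have horth : ∀ w ∈ plane.direction, ⟪p - q, w⟫ = 0 :=
    fun w hw ↦ inner_sub_orthogonalProjection_eq_zero plane p hw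
  have hq : ⟪q - P, n⟫ < 0 := (inner_sub_edgeNormal_eq_of_forall_inner_eq_zero horth).trans_lt h
  have hSn : 0 < ⟪S - P, n⟫ := inner_sub_edgeNormal_self_pos hS
  have hden : ⟪q - P, n⟫ - ⟪S - P, n⟫ < 0 := by linarith
  set θ := ⟪q - P, n⟫ / (⟪q - P, n⟫ - ⟪S - P, n⟫)
  have hθ : θ ∈ Set.Ioo (0 : ℝ) 1 := by
    constructor
    · exact div_pos_of_neg_of_neg hq hden
    · rw [div_lt_one_of_neg hden]; linarith
  -- `m` is where the segment from `q` to `S` crosses the line `PQ`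
  set m := AffineMap.lineMap q S θ
  have hm : ⟪m - P, n⟫ = 0 := by
    have : m - P = (1 - θ) • (q - P) + θ • (S - P) := by
      simp only [m, AffineMap.lineMap_apply_module]; module
    rw [this, inner_add_left, real_inner_smul_left, real_inner_smul_left]
    simp only [θ]
    field_simp [hden.ne]
    ring
  have hmL : m ∈ line[ℝ, P, Q] := mem_line_of_inner_sub_edgeNormal_eq_zero hS
    (AffineMap.lineMap_mem _ (EuclideanGeometry.orthogonalProjection_mem p)
      (subset_affineSpan ℝ _ (by simp))) hm
  have hqL : q ∉ line[ℝ, P, Q] := fun hqL ↦ hq.ne (inner_sub_edgeNormal_eq_zero_of_mem_line hqL)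
  have hqS : q ≠ S := fun hqS ↦ by rw [hqS] at hq; linarith
  refine ⟨q, EuclideanGeometry.orthogonalProjection_mem p, horth, ?_⟩
  exact (sbtw_lineMap_iff.2 ⟨hqS, hθ⟩).sOppSide_of_notMem_of_mem hqL hmL

lemma not_stableOn_of_inner_sub_edgeNormal_neg (h : ⟪p - P, edgeNormal P Q S⟫ < 0) :
    ¬ StableOn p S P Q := by
  rintro ⟨q, hq, horth⟩
  set n := edgeNormal P Q S
  have hpq : ⟪q - P, n⟫ = ⟪p - P, n⟫ := inner_sub_edgeNormal_eq_of_forall_inner_eq_zero horth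
  have hlin : IsLinearMap ℝ (fun x : E3 ↦ ⟪x, n⟫) :=
    ⟨fun x y ↦ inner_add_left x y n, fun c x ↦ real_inner_smul_left x n c⟩
  have hhull : convexHull ℝ {S, P, Q} ⊆ {x : E3 | ⟪P, n⟫ ≤ ⟪x, n⟫} := by
    refine convexHull_min ?_ (convex_halfSpace_ge hlin _)
    have hS : 0 ≤ ⟪S - P, n⟫ := inner_sub_edgeNormal P Q S S ▸ real_inner_self_nonneg
    have hQ := inner_sub_edgeNormal_eq_zero P Q S
    simp only [inner_sub_left] at hS hQ
    rintro x (rfl | rfl | rfl) <;> simp only [Set.mem_ofPred_eq] <;> linarith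
  have : ⟪P, n⟫ ≤ ⟪q, n⟫ := hhull (intrinsicInterior_subset hq)
  simp only [inner_sub_left] at hpq h
  linarith

lemma stableOn_rotate : StableOn p x y z ↔ StableOn p z x y := by
  unfold StableOn
  rw [Set.pair_comm y z, Set.insert_comm x z]

lemma stableOn_swap : StableOn p x y z ↔ StableOn p y x z := by
  unfold StableOn
  rw [Set.insert_comm x y]

lemma eventually_stableOn {q : E3}
    (hq : q ∈ intrinsicInterior ℝ (convexHull ℝ ({v₁, v₂, v₃} : Set E3))) :
    ∀ᶠ p in 𝓝 q, StableOn p v₁ v₂ v₃ := by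
  set N := affineSpan ℝ (convexHull ℝ ({v₁, v₂, v₃} : Set E3))
  obtain ⟨z, hz, rfl⟩ := mem_intrinsicInterior.1 hq
  have : Nonempty N := ⟨z⟩
  set π := EuclideanGeometry.orthogonalProjection N
  have hopen : IsOpen (π ⁻¹' interior ((↑) ⁻¹' convexHull ℝ {v₁, v₂, v₃})) :=
    isOpen_interior.preimage π.continuous
  have hz' : π z = z := EuclideanGeometry.orthogonalProjection_mem_subspace_eq_self z
  filter_upwards [hopen.mem_nhds (by rwa [Set.mem_preimage, hz'])] with p hp
  refine ⟨π p, mem_intrinsicInterior.2 ⟨π p, hp, rfl⟩, fun w hw ↦ ?_⟩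
  rw [← affineSpan_convexHull] at hw
  exact inner_sub_orthogonalProjection_eq_zero N p hw

lemma exists_stableOn_forall_inner_neg {v₀ v₁ v₂ v₃ : E3}
    (hv : AffineIndependent ℝ ![v₀, v₁, v₂, v₃]) {ι : Type*} [Finite ι] (P n : ι → E3)
    (hlex : ∀ j, ⟪v₀ - P j, n j⟫ < 0 ∨ ⟪v₀ - P j, n j⟫ = 0 ∧
      (⟪v₁ - P j, n j⟫ < 0 ∨ ⟪v₁ - P j, n j⟫ = 0 ∧ ⟪v₂ - P j, n j⟫ < 0)) :
    ∃ p ∈ interior (convexHull ℝ {v₀, v₁, v₂, v₃}),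
      StableOn p v₀ v₁ v₂ ∧ ∀ j, ⟪p - P j, n j⟫ < 0 := by
  have hspan : affineSpan ℝ (Set.range ![v₀, v₁, v₂, v₃]) = ⊤ := by
    rw [hv.affineSpan_eq_top_iff_card_eq_finrank_add_one]; simp
  set T : AffineBasis (Fin 4) ℝ E3 := ⟨_, hv, hspan⟩
  have hT : ⇑T = ![v₀, v₁, v₂, v₃] := rfl
  have hrange : Set.range T = {v₀, v₁, v₂, v₃} := by
    ext; simp [hT, eq_comm]; tauto
  obtain ⟨t, ⟨ht, ht1⟩, hneg⟩ : ∃ t : ℝ, (0 < t ∧ t < 1 / 2) ∧ ∀ j,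
      (1 - t - t ^ 2) * ⟪v₀ - P j, n j⟫ + t * ⟪v₁ - P j, n j⟫ + t ^ 2 * ⟪v₂ - P j, n j⟫ < 0 :=
    have hsmall : ∀ᶠ t in 𝓝[>] (0 : ℝ), t ∈ Set.Ioo 0 (1 / 2) := Ioo_mem_nhdsGT (by norm_num)
    (hsmall.and (eventually_all.2 fun j ↦ eventually_lex_neg (hlex j))).exists
  have ht' : 0 < 1 - t - t ^ 2 := by nlinarith
  set w : Fin 4 → ℝ := ![1 - t - t ^ 2, t, t ^ 2, 0]
  set face : Finset (Fin 4) := {0, 1, 2}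
  have hw : ∑ i ∈ face, w i = 1 := by simp [face, w]
  set q := (1 - t - t ^ 2) • v₀ + t • v₁ + t ^ 2 • v₂
  have hq_relint : q ∈ intrinsicInterior ℝ (convexHull ℝ {v₀, v₁, v₂}) := by
    have := T.affineCombination_mem_intrinsicInterior_convexHull_image hw
      (by simp [face, w, ht, ht'])
    have hcomb : face.affineCombination ℝ T w = q := by
      rw [Finset.affineCombination_eq_linear_combination _ _ _ hw]
      simp [face, w, hT, q, add_assoc]
    have hface : T '' face = {v₀, v₁, v₂} := by simp [face, hT, Set.image_insert_eq]
    rwa [hcomb, hface] at this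
  have hq_neg : ∀ j, ⟪q - P j, n j⟫ < 0 := fun j ↦ by
    have : q - P j = (1 - t - t ^ 2) • (v₀ - P j) + t • (v₁ - P j) + t ^ 2 • (v₂ - P j) := by
      module
    rw [this, inner_add_left, inner_add_left, real_inner_smul_left, real_inner_smul_left,
      real_inner_smul_left]
    exact hneg j
  refine (convex_convexHull ℝ _).exists_mem_interior_of_eventually
    ⟨_, hrange ▸ T.centroid_mem_interior_convexHull⟩
    (convexHull_mono (by simp [Set.insert_subset_iff]) (intrinsicInterior_subset hq_relint))
    ((eventually_stableOn hq_relint).and <| eventually_all.2 fun j ↦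
      (Continuous.continuousAt (by fun_prop)).eventually_lt continuousAt_const (hq_neg j))

end Tetrahedron

section FallingPatterns

variable {a b c d : E3} (h : AffineIndependent ℝ ![a, b, c, d])
  (hab : ObtuseEdge a b c d) (hbc : ObtuseEdge b c a d) (hcd : ObtuseEdge c d a b)
include h hab hbc hcd

lemma exists_fallingPattern_zero :
    ∃ p ∈ interior (convexHull ℝ {a, b, c, d}), FallingPattern a b c d p 0 := by
  have hv : AffineIndependent ℝ ![b, a, d, c] := by
    convert (affineIndependent_equiv (Equiv.swap (0 : Fin 4) 1 * Equiv.swap 2 3)).2 h using 1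
    ext i : 1; fin_cases i <;> rfl
  obtain ⟨p, hp, hstable, hneg⟩ := exists_stableOn_forall_inner_neg hv ![a, b, c]
    ![edgeNormal a b c, edgeNormal b c d, edgeNormal c d a] <| by
      intro j; fin_cases j
      · exact Or.inr ⟨inner_sub_edgeNormal_eq_zero a b c, Or.inr ⟨by simp,
          hab.inner_sub_edgeNormal_neg'⟩⟩
      · exact Or.inr ⟨by simp, Or.inl hbc.inner_sub_edgeNormal_neg⟩
      · exact Or.inl hcd.inner_sub_edgeNormal_neg'
  have h₁ : ⟪p - a, edgeNormal a b c⟫ < 0 := hneg 0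
  have h₂ : ⟪p - b, edgeNormal b c d⟫ < 0 := hneg 1
  have h₃ : ⟪p - c, edgeNormal c d a⟫ < 0 := hneg 2
  refine ⟨p, by convert hp using 3; ext; simp; tauto, stableOn_swap.1 hstable,
    fun hs ↦ not_stableOn_of_inner_sub_edgeNormal_neg h₁ (stableOn_rotate.1 hs),
    fun hs ↦ not_stableOn_of_inner_sub_edgeNormal_neg h₂ (stableOn_rotate.1 hs),
    not_stableOn_of_inner_sub_edgeNormal_neg h₃,
    tipsOver_of_inner_sub_edgeNormal_neg ?_ h₁, tipsOver_of_inner_sub_edgeNormal_neg ?_ h₂,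
    tipsOver_of_inner_sub_edgeNormal_neg ?_ h₃⟩
  · exact h.notMem_affineSpan_pair (i := 2) (j := 0) (l := 1) (by decide) (by decide)
  · exact h.notMem_affineSpan_pair (i := 3) (j := 1) (l := 2) (by decide) (by decide)
  · exact h.notMem_affineSpan_pair (i := 0) (j := 2) (l := 3) (by decide) (by decide)

lemma exists_fallingPattern_one :
    ∃ p ∈ interior (convexHull ℝ {a, b, c, d}), FallingPattern a b c d p 1 := by
  have hv : AffineIndependent ℝ ![b, c, a, d] := by
    convert (affineIndependent_equiv (Equiv.swap (0 : Fin 4) 1 * Equiv.swap 1 2)).2 h using 1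
    ext i : 1; fin_cases i <;> rfl
  obtain ⟨p, hp, hstable, hneg⟩ := exists_stableOn_forall_inner_neg hv ![a, b, c]
    ![edgeNormal a b d, edgeNormal b c d, edgeNormal c d a] <| by
      intro j; fin_cases j
      · exact Or.inr ⟨inner_sub_edgeNormal_eq_zero a b d, Or.inl hab.inner_sub_edgeNormal_neg⟩
      · exact Or.inr ⟨by simp, Or.inr ⟨inner_sub_edgeNormal_eq_zero b c d,
          hbc.inner_sub_edgeNormal_neg⟩⟩
      · exact Or.inl hcd.inner_sub_edgeNormal_neg'
  have h₁ : ⟪p - a, edgeNormal a b d⟫ < 0 := hneg 0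
  have h₂ : ⟪p - b, edgeNormal b c d⟫ < 0 := hneg 1
  have h₃ : ⟪p - c, edgeNormal c d a⟫ < 0 := hneg 2
  refine ⟨p, by convert hp using 3; ext; simp; tauto, stableOn_rotate.1 hstable,
    fun hs ↦ not_stableOn_of_inner_sub_edgeNormal_neg h₁ (stableOn_rotate.1 hs),
    fun hs ↦ not_stableOn_of_inner_sub_edgeNormal_neg h₂ (stableOn_rotate.1 hs),
    not_stableOn_of_inner_sub_edgeNormal_neg h₃,
    tipsOver_of_inner_sub_edgeNormal_neg ?_ h₁, tipsOver_of_inner_sub_edgeNormal_neg ?_ h₂,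
    tipsOver_of_inner_sub_edgeNormal_neg ?_ h₃⟩
  · exact h.notMem_affineSpan_pair (i := 3) (j := 0) (l := 1) (by decide) (by decide)
  · exact h.notMem_affineSpan_pair (i := 3) (j := 1) (l := 2) (by decide) (by decide)
  · exact h.notMem_affineSpan_pair (i := 0) (j := 2) (l := 3) (by decide) (by decide)

lemma exists_fallingPattern_two :
    ∃ p ∈ interior (convexHull ℝ {a, b, c, d}), FallingPattern a b c d p 2 := by
  have hv : AffineIndependent ℝ ![b, c, d, a] := by
    convert (affineIndependent_equiv (finRotate 4)).2 h using 1
    ext i : 1; fin_cases i <;> rfl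
  obtain ⟨p, hp, hstable, hneg⟩ := exists_stableOn_forall_inner_neg hv ![a, b, c]
    ![edgeNormal a b d, edgeNormal b c a, edgeNormal c d a] <| by
      intro j; fin_cases j
      · exact Or.inr ⟨inner_sub_edgeNormal_eq_zero a b d, Or.inl hab.inner_sub_edgeNormal_neg⟩
      · exact Or.inr ⟨by simp, Or.inr ⟨inner_sub_edgeNormal_eq_zero b c a,
          hbc.inner_sub_edgeNormal_neg'⟩⟩
      · exact Or.inl hcd.inner_sub_edgeNormal_neg'
  have h₁ : ⟪p - a, edgeNormal a b d⟫ < 0 := hneg 0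
  have h₂ : ⟪p - b, edgeNormal b c a⟫ < 0 := hneg 1
  have h₃ : ⟪p - c, edgeNormal c d a⟫ < 0 := hneg 2
  refine ⟨p, by convert hp using 3; ext; simp; tauto, hstable,
    fun hs ↦ not_stableOn_of_inner_sub_edgeNormal_neg h₁ (stableOn_rotate.1 hs),
    not_stableOn_of_inner_sub_edgeNormal_neg h₂, not_stableOn_of_inner_sub_edgeNormal_neg h₃,
    tipsOver_of_inner_sub_edgeNormal_neg ?_ h₁, tipsOver_of_inner_sub_edgeNormal_neg ?_ h₂,
    tipsOver_of_inner_sub_edgeNormal_neg ?_ h₃⟩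
  · exact h.notMem_affineSpan_pair (i := 3) (j := 0) (l := 1) (by decide) (by decide)
  · exact h.notMem_affineSpan_pair (i := 0) (j := 1) (l := 2) (by decide) (by decide)
  · exact h.notMem_affineSpan_pair (i := 0) (j := 2) (l := 3) (by decide) (by decide)

lemma exists_fallingPattern_three :
    ∃ p ∈ interior (convexHull ℝ {a, b, c, d}), FallingPattern a b c d p 3 := by
  have hv : AffineIndependent ℝ ![c, d, a, b] := by
    convert (affineIndependent_equiv (Equiv.swap (0 : Fin 4) 2 * Equiv.swap 1 3)).2 h using 1
    ext i : 1; fin_cases i <;> rfl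
  obtain ⟨p, hp, hstable, hneg⟩ := exists_stableOn_forall_inner_neg hv ![a, b, c]
    ![edgeNormal a b d, edgeNormal b c a, edgeNormal c d b] <| by
      intro j; fin_cases j
      · exact Or.inl hab.inner_sub_edgeNormal_neg
      · exact Or.inr ⟨inner_sub_edgeNormal_eq_zero b c a, Or.inl hbc.inner_sub_edgeNormal_neg'⟩
      · exact Or.inr ⟨by simp, Or.inr ⟨inner_sub_edgeNormal_eq_zero c d b,
          hcd.inner_sub_edgeNormal_neg⟩⟩
  have h₁ : ⟪p - a, edgeNormal a b d⟫ < 0 := hneg 0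
  have h₂ : ⟪p - b, edgeNormal b c a⟫ < 0 := hneg 1
  have h₃ : ⟪p - c, edgeNormal c d b⟫ < 0 := hneg 2
  refine ⟨p, by convert hp using 3; ext; simp; tauto, stableOn_rotate.1 hstable,
    fun hs ↦ not_stableOn_of_inner_sub_edgeNormal_neg h₁ (stableOn_rotate.1 hs),
    not_stableOn_of_inner_sub_edgeNormal_neg h₂, not_stableOn_of_inner_sub_edgeNormal_neg h₃,
    tipsOver_of_inner_sub_edgeNormal_neg ?_ h₁, tipsOver_of_inner_sub_edgeNormal_neg ?_ h₂,
    tipsOver_of_inner_sub_edgeNormal_neg ?_ h₃⟩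
  · exact h.notMem_affineSpan_pair (i := 3) (j := 0) (l := 1) (by decide) (by decide)
  · exact h.notMem_affineSpan_pair (i := 0) (j := 1) (l := 2) (by decide) (by decide)
  · exact h.notMem_affineSpan_pair (i := 1) (j := 2) (l := 3) (by decide) (by decide)

end FallingPatterns

/-- **All four falling patterns are realizable**: if the edges `ab`, `bc`, `cd`
of the tetrahedron `abcd` are all obtuse, then for each face `S` along the chain
`C–D–A–B` there is a load point `p` in the interior of the tetrahedron realizing
the falling pattern with sink `S`: the tetrahedron is stable on `S` and on no
other face, and every other face tips over the shared edge onto the next face of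
the chain toward `S`.  In particular the patterns `C→D→A→B`, `C→D→A←B`,
`C→D←A←B` and `C←D←A←B` all occur. -/
theorem obtuse_path_realizes_all_falling_patterns (a b c d : E3)
    (h : AffineIndependent ℝ ![a, b, c, d])
    (hab : ObtuseEdge a b c d) (hbc : ObtuseEdge b c a d) (hcd : ObtuseEdge c d a b) :
    ∀ k : Fin 4, ∃ p ∈ interior (convexHull ℝ ({a, b, c, d} : Set E3)),
      FallingPattern a b c d p k := by
  intro k
  fin_cases k
  exacts [exists_fallingPattern_zero h hab hbc hcd, exists_fallingPattern_one h hab hbc hcd,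
    exists_fallingPattern_two h hab hbc hcd, exists_fallingPattern_three h hab hbc hcd]
end
end

section
/- For any tetrahedron and any point p in its interior, there is at least one face F such that the orthogonal projection of p onto the affine span of F lies in F; in particular every loaded tetrahedron has at least one gravitationally stable resting face. -/
open RealInnerProductSpace

noncomputable section

/-- Weak stability: the orthogonal projection of the load point `p` onto the
affine span of the face with vertices `v₁, v₂, v₃` lies in the face itself. -/
def RestsOn (p v₁ v₂ v₃ : E3) : Prop :=
  ∃ q ∈ convexHull ℝ ({v₁, v₂, v₃} : Set E3),
    ∀ w ∈ (affineSpan ℝ ({v₁, v₂, v₃} : Set E3)).direction, ⟪p - q, w⟫ = 0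

/-- Weak stability on the `i`-th face of the tetrahedron `ABCD`. -/
def FaceRests (A B C D p : E3) : Fin 4 → Prop
  | 0 => RestsOn p B C D
  | 1 => RestsOn p A C D
  | 2 => RestsOn p A B D
  | 3 => RestsOn p A B C

/-! Let `q` be a point of `(interior K)ᶜ` nearest to the load point `p`, where `K` is the simplex.
Then `q ∈ K` lies on a facet `F` (some barycentric coordinate of `q` vanishes). The affine span
of `F` misses the interior of `K`, so all of its points are at distance at least `dist p q`
from `p`; hence `q` is the foot of the perpendicular from `p` to that span, and it lies in `F`. -/

open Set Metric

section

variable {𝕜 V P ι : Type*}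

theorem AffineBasis.coord_eq_zero_of_mem_affineSpan_image_compl [Ring 𝕜] [AddCommGroup V]
    [Module 𝕜 V] [AddTorsor V P] (b : AffineBasis ι 𝕜 P) {i : ι} {x : P}
    (hx : x ∈ affineSpan 𝕜 (b '' {i}ᶜ)) : b.coord i x = 0 := by
  have hcoord : b.coord i '' (b '' {i}ᶜ) ⊆ {0} := by
    rintro _ ⟨_, ⟨j, hj, rfl⟩, rfl⟩
    exact b.coord_apply_ne (Ne.symm hj)
  have hmem : b.coord i x ∈ affineSpan 𝕜 (b.coord i '' (b '' {i}ᶜ)) :=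
    AffineSubspace.map_span (b.coord i) _ ▸ AffineSubspace.mem_map_of_mem _ hx
  simpa using affineSpan_mono 𝕜 hcoord hmem

theorem AffineBasis.mem_convexHull_image_compl_of_coord_eq_zero [Field 𝕜] [LinearOrder 𝕜]
    [IsStrictOrderedRing 𝕜] [AddCommGroup V] [Module 𝕜 V] [Fintype ι]
    (b : AffineBasis ι 𝕜 V) {i : ι} {x : V} (hx : x ∈ convexHull 𝕜 (range b))
    (hi : b.coord i x = 0) : x ∈ convexHull 𝕜 (b '' {i}ᶜ) := by
  classical
  rw [b.convexHull_eq_nonneg_coord] at hx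
  have hsum : ∑ j ∈ Finset.univ.erase i, b.coord j x • b j = x := by
    rw [Finset.sum_erase _ (by simp [hi]), b.linear_combination_coord_eq_self]
  rw [← hsum]
  refine (convex_convexHull 𝕜 _).sum_mem (fun j _ => hx j) ?_ fun j hj => ?_
  · rw [Finset.sum_erase (f := fun j => b.coord j x) _ hi, b.sum_coord_apply_eq_one]
  · exact subset_convexHull 𝕜 _ ⟨j, Finset.ne_of_mem_erase hj, rfl⟩

end

theorem AffineSubspace.inner_sub_eq_zero_of_forall_dist_le {F : Type*} [NormedAddCommGroup F]
    [InnerProductSpace ℝ F] {S : AffineSubspace ℝ F} {p q : F} (hq : q ∈ S)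
    (hmin : ∀ x ∈ S, dist p q ≤ dist p x) : ∀ w ∈ S.direction, ⟪p - q, w⟫ = 0 := by
  have hle : ∀ w : S.direction, ‖p - q - 0‖ ≤ ‖p - q - w‖ := fun w => by
    simpa [dist_eq_norm, sub_sub, add_comm] using hmin _ (S.vadd_mem_of_mem_direction w.2 hq)
  simpa using (S.direction.norm_eq_iInf_iff_real_inner_eq_zero (zero_mem _)).1 <|
    le_antisymm (le_ciInf hle) (ciInf_le ⟨0, forall_mem_range.2 fun _ => norm_nonneg _⟩ 0)

theorem exists_mem_sdiff_interior_forall_dist_le {E : Type*} [NormedAddCommGroup E]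
    [NormedSpace ℝ E] [ProperSpace E] {K : Set E} (hK : IsClosed K)
    (hne : (interior K)ᶜ.Nonempty) {p : E} (hp : p ∈ interior K) :
    ∃ q ∈ K \ interior K, ∀ x ∉ interior K, dist p q ≤ dist p x := by
  have hclosed : IsClosed (interior K)ᶜ := isOpen_interior.isClosed_compl
  obtain ⟨q, hq, hpq⟩ := hclosed.exists_infDist_eq_dist hne p
  refine ⟨q, ⟨?_, hq⟩, fun x hx => hpq ▸ infDist_le_dist_of_mem hx⟩
  have hpos : 0 < infDist p (interior K)ᶜ := (hclosed.notMem_iff_infDist_pos hne).1 (not_not.2 hp)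
  have hball : closedBall p (infDist p (interior K)ᶜ) ⊆ K := by
    rw [← closure_ball p hpos.ne']
    exact closure_minimal (ball_infDist_compl_subset.trans interior_subset) hK
  exact hball (by rw [mem_closedBall, dist_comm, hpq])

def RestsOnConvexHull {F : Type*} [NormedAddCommGroup F] [InnerProductSpace ℝ F] (p : F)
    (s : Set F) : Prop :=
  ∃ q ∈ convexHull ℝ s, ∀ w ∈ (affineSpan ℝ s).direction, ⟪p - q, w⟫ = 0

theorem AffineBasis.exists_restsOnConvexHull_image_compl {ι F : Type*} [Fintype ι]
    [NormedAddCommGroup F] [InnerProductSpace ℝ F] [FiniteDimensional ℝ F] [Nontrivial F]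
    (b : AffineBasis ι ℝ F) {p : F} (hp : p ∈ interior (convexHull ℝ (range b))) :
    ∃ i, RestsOnConvexHull p (b '' {i}ᶜ) := by
  have hK : IsCompact (convexHull ℝ (range b)) := (finite_range b).isCompact_convexHull ℝ
  have hne : (interior (convexHull ℝ (range b)))ᶜ.Nonempty :=
    (nonempty_compl.2 hK.ne_univ).mono (compl_subset_compl.2 interior_subset)
  obtain ⟨q, ⟨hqK, hq⟩, hmin⟩ := exists_mem_sdiff_interior_forall_dist_le hK.isClosed hne hp
  rw [b.interior_convexHull] at hq hmin
  obtain ⟨i, hi⟩ : ∃ i, b.coord i q = 0 := by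
    rw [b.convexHull_eq_nonneg_coord] at hqK
    simp only [mem_ofPred_eq, not_forall, not_lt] at hq
    obtain ⟨i, hi⟩ := hq
    exact ⟨i, le_antisymm hi (hqK i)⟩
  have hface := b.mem_convexHull_image_compl_of_coord_eq_zero hqK hi
  refine ⟨i, q, hface, AffineSubspace.inner_sub_eq_zero_of_forall_dist_le
    (convexHull_subset_affineSpan _ hface) fun x hx => hmin x fun hpos => ?_⟩
  exact (hpos i).ne' (b.coord_eq_zero_of_mem_affineSpan_image_compl hx)

theorem faceRests_iff_restsOnConvexHull (A B C D p : E3) (i : Fin 4) :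
    FaceRests A B C D p i ↔ RestsOnConvexHull p (![A, B, C, D] '' {i}ᶜ) := by
  fin_cases i <;> refine Iff.of_eq (congrArg (RestsOnConvexHull p) ?_) <;> ext x <;>
    simp [Fin.exists_fin_succ, eq_comm]

/-- **Every loaded tetrahedron has a weakly stable face**: for any tetrahedron
`ABCD` and any load point `p` in its interior there is at least one face `F`
such that the orthogonal projection of `p` onto the affine span of `F` lies
in `F`. -/
theorem exists_resting_face (A B C D : E3)
    (h : AffineIndependent ℝ ![A, B, C, D])
    (p : E3) (hp : p ∈ interior (convexHull ℝ ({A, B, C, D} : Set E3))) :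
    ∃ i : Fin 4, FaceRests A B C D p i := by
  have hspan : affineSpan ℝ (range ![A, B, C, D]) = ⊤ := by
    rw [h.affineSpan_eq_top_iff_card_eq_finrank_add_one]
    simp
  let b : AffineBasis (Fin 4) ℝ E3 := ⟨![A, B, C, D], h, hspan⟩
  have hrange : range b = {A, B, C, D} := by
    change range ![A, B, C, D] = _
    simp [Fin.range_fin_succ]
  obtain ⟨i, hi⟩ := b.exists_restsOnConvexHull_image_compl (hrange ▸ hp)
  exact ⟨i, (faceRests_iff_restsOnConvexHull A B C D p i).2 hi⟩
end
end
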